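/- Fix r > 0. Let u = (u₁, u₂) and v = (v₁, v₂) be points of ℝ² with 0 < u₂ < r and 0 < v₂ < r. Set a = √(r² − u₂²) and d = |u₁ − v₁|. Then there exists w = (w₁, w₂) with 0 < w₂ < r such that both u and v lie in cone_r(w) if and only if (d − a)² + v₂² < r² or d ≤ a. -/

import Mathlib

/-- Euclidean distance on ℝ², viewed as pairs. -/
noncomputable def edist2 (p q : ℝ × ℝ) : ℝ :=
  Real.sqrt ((p.1 - q.1) ^ 2 + (p.2 - q.2) ^ 2)

/-- Infinite-setting penumbral shadow cone rooted at `w` (with `0 < w₂ < r`). -/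
noncomputable def penumbralCone (r : ℝ) (w : ℝ × ℝ) : Set (ℝ × ℝ) :=
  {z : ℝ × ℝ | 0 < z.2 ∧
    edist2 z (w.1 + Real.sqrt (r ^ 2 - w.2 ^ 2), 0) ≤ r ∧
    edist2 z (w.1 - Real.sqrt (r ^ 2 - w.2 ^ 2), 0) ≤ r}

/-! A point `z` with `0 < z₂ ≤ r` lies inside the radius-`r` semicircle centred at `(c, 0)` iff
`c` lies in the interval of half-width `√(r² − z₂²)` about `z₁`; so `z ∈ cone_r(w)` iff both feet
`w₁ ± √(r² − w₂²)` lie in that interval. As `w₂` ranges over `(0, r)` so does the half-width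
`√(r² − w₂²)`, hence a common cone exists iff the intervals of radii `a` and `b = √(r² − v₂²)`
about `u₁` and `v₁` share more than one point, i.e. `d < a + b`. For `d > a` this reads
`(d − a)² < b² = r² − v₂²`. -/

open Set

noncomputable def coveringCenters (r : ℝ) (z : ℝ × ℝ) : Set ℝ :=
  Icc (z.1 - √(r ^ 2 - z.2 ^ 2)) (z.1 + √(r ^ 2 - z.2 ^ 2))

lemma edist2_le_iff_mem_coveringCenters {r c : ℝ} {z : ℝ × ℝ} (hz : |z.2| ≤ r) :
    edist2 z (c, 0) ≤ r ↔ c ∈ coveringCenters r z := by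
  have hr : 0 ≤ r := (abs_nonneg _).trans hz
  have hzr : 0 ≤ r ^ 2 - z.2 ^ 2 := sub_nonneg.2 (sq_le_sq' (abs_le.1 hz).1 (abs_le.1 hz).2)
  rw [coveringCenters, ← mem_Icc_iff_abs_le, Real.le_sqrt (abs_nonneg _) hzr, sq_abs, edist2,
    Real.sqrt_le_left hr, sub_zero, le_sub_iff_add_le]

lemma mem_penumbralCone_iff {r : ℝ} {w z : ℝ × ℝ} (hz : z.2 ≤ r) :
    z ∈ penumbralCone r w ↔ 0 < z.2 ∧
      w.1 + √(r ^ 2 - w.2 ^ 2) ∈ coveringCenters r z ∧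
      w.1 - √(r ^ 2 - w.2 ^ 2) ∈ coveringCenters r z :=
  and_congr_right fun hz0 => by
    simp only [edist2_le_iff_mem_coveringCenters ((abs_of_pos hz0).trans_le hz)]

lemma sqrt_sq_sub_sq_mem_Ioo {r t : ℝ} (ht : t ∈ Ioo 0 r) : √(r ^ 2 - t ^ 2) ∈ Ioo 0 r := by
  obtain ⟨h0, hr⟩ := ht
  exact ⟨Real.sqrt_pos.2 (by nlinarith), (Real.sqrt_lt' (h0.trans hr)).2 (by nlinarith)⟩

lemma sqrt_sq_sub_sq_sqrt_sq_sub_sq {r t : ℝ} (h0 : 0 ≤ t) (hr : t ≤ r) :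
    √(r ^ 2 - √(r ^ 2 - t ^ 2) ^ 2) = t := by
  rw [Real.sq_sqrt (by nlinarith), sub_sub_cancel, Real.sqrt_sq h0]

lemma exists_penumbralCone_mem_iff {r : ℝ} {u v : ℝ × ℝ} (hu0 : 0 < u.2) (hu : u.2 ≤ r)
    (hv0 : 0 < v.2) (hv : v.2 ≤ r) :
    (∃ w : ℝ × ℝ, 0 < w.2 ∧ w.2 < r ∧ u ∈ penumbralCone r w ∧ v ∈ penumbralCone r w) ↔
      ∃ c, ∃ s ∈ Ioo 0 r, c + s ∈ coveringCenters r u ∩ coveringCenters r v ∧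
        c - s ∈ coveringCenters r u ∩ coveringCenters r v := by
  simp only [mem_penumbralCone_iff hu, mem_penumbralCone_iff hv, hu0, hv0, true_and,
    mem_inter_iff]
  constructor
  · rintro ⟨w, hw0, hwr, ⟨huR, huL⟩, hvR, hvL⟩
    exact ⟨w.1, _, sqrt_sq_sub_sq_mem_Ioo ⟨hw0, hwr⟩, ⟨huR, hvR⟩, huL, hvL⟩
  · rintro ⟨c, s, hs, ⟨huR, hvR⟩, huL, hvL⟩
    obtain ⟨hh0, hhr⟩ := sqrt_sq_sub_sq_mem_Ioo hs
    refine ⟨(c, √(r ^ 2 - s ^ 2)), hh0, hhr, ?_⟩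
    simp only [sqrt_sq_sub_sq_sqrt_sq_sub_sq hs.1.le hs.2.le]
    exact ⟨⟨huR, huL⟩, hvR, hvL⟩

lemma exists_add_sub_mem_iff_nontrivial {J : Set ℝ} [J.OrdConnected] {r : ℝ} (hr : 0 < r) :
    (∃ c, ∃ s ∈ Ioo 0 r, c + s ∈ J ∧ c - s ∈ J) ↔ J.Nontrivial := by
  constructor
  · rintro ⟨c, s, hs, hR, hL⟩
    exact nontrivial_of_lt hL hR (by linarith [hs.1])
  · intro h
    obtain ⟨x, hx, y, hy, hxy⟩ := h.exists_lt
    set s := min ((y - x) / 2) (r / 2)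
    have hs0 : 0 < s := lt_min (by linarith) (by linarith)
    have hsx : s ≤ (y - x) / 2 := min_le_left _ _
    refine ⟨(x + y) / 2, s, ⟨hs0, (min_le_right _ _).trans_lt (by linarith)⟩, ?_, ?_⟩ <;>
      exact OrdConnected.out ‹_› hx hy ⟨by linarith, by linarith⟩

lemma Set.nontrivial_Icc_iff {α : Type*} [LinearOrder α] {a b : α} :
    (Icc a b).Nontrivial ↔ a < b := by
  refine ⟨fun h => ?_, fun h => nontrivial_of_lt (left_mem_Icc.2 h.le) (right_mem_Icc.2 h.le) h⟩
  obtain ⟨x, hx, y, hy, hxy⟩ := h.exists_lt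
  exact hx.1.trans_lt (hxy.trans_le hy.2)

lemma Icc_inter_Icc_nontrivial_iff_abs_sub_lt {x y a b : ℝ} (ha : 0 < a) (hb : 0 < b) :
    (Icc (x - a) (x + a) ∩ Icc (y - b) (y + b)).Nontrivial ↔ |x - y| < a + b := by
  rw [Icc_inter_Icc, nontrivial_Icc_iff, max_lt_iff, lt_min_iff, lt_min_iff, abs_sub_lt_iff]
  constructor
  · rintro ⟨⟨-, h₁⟩, h₂, -⟩
    constructor <;> linarith
  · rintro ⟨h₁, h₂⟩
    refine ⟨⟨?_, ?_⟩, ?_, ?_⟩ <;> linarith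

lemma lt_add_iff_sq_sub_lt_or_le {a b d : ℝ} (hb : 0 < b) :
    d < a + b ↔ (d - a) ^ 2 < b ^ 2 ∨ d ≤ a := by
  rcases le_or_gt d a with h | h
  · simp only [h, or_true, iff_true]
    linarith
  · rw [sq_lt_sq₀ (sub_nonneg.2 h.le) hb.le, sub_lt_iff_lt_add']
    simp [h.not_ge]

theorem penumbral_cone_existence_criterion_general
    (r : ℝ) (u v : ℝ × ℝ)
    (hu2 : 0 < u.2) (hu2r : u.2 < r) (hv2 : 0 < v.2) (hv2r : v.2 < r)
    (a d : ℝ)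
    (ha : a = Real.sqrt (r ^ 2 - u.2 ^ 2)) (hd : d = |u.1 - v.1|) :
    (∃ w : ℝ × ℝ, 0 < w.2 ∧ w.2 < r ∧
        u ∈ penumbralCone r w ∧ v ∈ penumbralCone r w) ↔
      (d - a) ^ 2 + v.2 ^ 2 < r ^ 2 ∨ d ≤ a := by
  have ha0 : 0 < a := ha ▸ Real.sqrt_pos.2 (by nlinarith)
  have hb0 : 0 < √(r ^ 2 - v.2 ^ 2) := Real.sqrt_pos.2 (by nlinarith)
  rw [exists_penumbralCone_mem_iff hu2 hu2r.le hv2 hv2r.le, coveringCenters, coveringCenters,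
    exists_add_sub_mem_iff_nontrivial (hu2.trans hu2r), ← ha,
    Icc_inter_Icc_nontrivial_iff_abs_sub_lt ha0 hb0, ← hd, lt_add_iff_sq_sub_lt_or_le hb0,
    Real.sq_sqrt (by nlinarith), lt_sub_iff_add_lt]

/-- With `a = √(r² − u₂²)` and `d = |u₁ − v₁|`, there exists a penumbral cone
(rooted at some `w` with `0 < w₂ < r`) containing both `u` and `v` if and only
if `(d − a)² + v₂² < r²` or `d ≤ a`. -/
theorem penumbral_cone_existence_criterion
    (r : ℝ) (hr : 0 < r) (u v : ℝ × ℝ)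
    (hu2 : 0 < u.2) (hu2r : u.2 < r) (hv2 : 0 < v.2) (hv2r : v.2 < r)
    (a d : ℝ)
    (ha : a = Real.sqrt (r ^ 2 - u.2 ^ 2)) (hd : d = |u.1 - v.1|) :
    (∃ w : ℝ × ℝ, 0 < w.2 ∧ w.2 < r ∧
        u ∈ penumbralCone r w ∧ v ∈ penumbralCone r w) ↔
      (d - a) ^ 2 + v.2 ^ 2 < r ^ 2 ∨ d ≤ a :=
  penumbral_cone_existence_criterion_general r u v hu2 hu2r hv2 hv2r a d ha hd
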